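/- Let G and H be nonzero formal power series in ℝ[[ρ,θ]] whose common vertices satisfy the non-vanishing condition for addition, and suppose ℘(Δ(H)) ⊆ ℘(Δ(G)) (i.e. the Newton polygon of H lies above that of G). Then ℘(Δ(G+H)) = ℘(Δ(G)); in particular the Newton polygon of G+H equals the Newton polygon of G. -/

import Mathlib

open scoped Pointwise

/-- The coefficient of `ρ^i θ^j` in a formal power series in two variables over `ℝ`. -/
noncomputable def coef (F : MvPowerSeries (Fin 2) ℝ) (p : ℕ × ℕ) : ℝ :=
  MvPowerSeries.coeff (R := ℝ) (Finsupp.single (0 : Fin 2) p.1 + Finsupp.single (1 : Fin 2) p.2) F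

/-- The support (valid index set) `Δ(F)` of a power series. -/
noncomputable def suppSet (F : MvPowerSeries (Fin 2) ℝ) : Set (ℕ × ℕ) :=
  {p | coef F p ≠ 0}

/-- Embedding of lattice indices into `ℝ²`. -/
noncomputable def embed (p : ℕ × ℕ) : ℝ × ℝ := ((p.1 : ℝ), (p.2 : ℝ))

/-- The lower convex semi-hull `℘(S) = conv(S + ℝ≥0²)` of a set of lattice points. -/
noncomputable def lsh (S : Set (ℕ × ℕ)) : Set (ℝ × ℝ) :=
  convexHull ℝ (embed '' S + {q : ℝ × ℝ | 0 ≤ q.1 ∧ 0 ≤ q.2})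

/-- The vertex set `Δ^V(F)` of the Newton polygon. -/
noncomputable def vertexSet (F : MvPowerSeries (Fin 2) ℝ) : Set (ℕ × ℕ) :=
  {p | embed p ∈ (lsh (suppSet F)).extremePoints ℝ}

/-- The set `Λ^V(G\H)` of vanishing common vertices. -/
noncomputable def lamV (G H : MvPowerSeries (Fin 2) ℝ) : Set (ℕ × ℕ) :=
  {p | p ∈ vertexSet G ∧ p ∈ suppSet H ∧ coef G p + coef H p = 0}

/-! A vertex `p` of `℘(Δ(G))` cannot cancel in `G + H`: otherwise `p ∈ Δ(H)`, so `p` is also a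
vertex of `℘(Δ(H)) ⊆ ℘(Δ(G))`, and `p` would be a vanishing common vertex on both sides.
By Dickson's lemma `℘(Δ(G))` is `conv(F) + ℝ≥0²` for the finite set `F` of minimal points of
`Δ(G)`, and a generator that is not a vertex can be dropped without changing this set; hence
`℘(Δ(G))` is generated by vertices lying in `Δ(G + H)`. Conversely `Δ(G + H) ⊆ Δ(G) ∪ Δ(H)` and
`℘(Δ(H)) ⊆ ℘(Δ(G))`. -/

open Set

section OrderedModule

variable {E : Type*} [AddCommGroup E] [PartialOrder E] [IsOrderedAddMonoid E] [Module ℝ E]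
  [PosSMulMono ℝ E]

lemma convexHull_add_Ici (s : Set E) : convexHull ℝ (s + Ici 0) = convexHull ℝ s + Ici 0 := by
  rw [convexHull_add, (convex_Ici 0).convexHull_eq]

lemma convexHull_add_Ici_subset {s t : Set E} (h : s ⊆ convexHull ℝ t + Ici 0) :
    convexHull ℝ s + Ici 0 ⊆ convexHull ℝ t + Ici 0 := by
  rintro _ ⟨y, hy, q, hq, rfl⟩
  exact (isUpperSet_Ici 0).add_left (le_add_of_nonneg_right hq)
    (convexHull_min h ((convex_convexHull ℝ t).add (convex_Ici 0)) hy)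

lemma eq_zero_of_smul_add_smul_eq_zero {q₁ q₂ : E} (h₁ : 0 ≤ q₁) (h₂ : 0 ≤ q₂) {a b : ℝ}
    (ha : 0 < a) (hb : 0 ≤ b) (h : a • q₁ + b • q₂ = 0) : q₁ = 0 := by
  have hle : a • q₁ ≤ 0 := by
    rw [eq_neg_of_add_eq_zero_left h, neg_nonpos]
    exact smul_nonneg hb h₂
  exact (smul_eq_zero.mp (hle.antisymm (smul_nonneg ha.le h₁))).resolve_left ha.ne'

lemma mem_extremePoints_singleton_add_Ici (b : E) :
    b ∈ ({b} + Ici 0 : Set E).extremePoints ℝ := by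
  rw [singleton_add]
  refine ⟨⟨0, le_rfl, add_zero b⟩, ?_⟩
  rintro _ ⟨q₁, hq₁, rfl⟩ _ ⟨q₂, hq₂, rfl⟩ ⟨t, u, ht, hu, htu, hseg⟩
  have hsum : t • q₁ + u • q₂ = 0 := by
    linear_combination (norm := module) hseg - htu • b
  simp [eq_zero_of_smul_add_smul_eq_zero hq₁ hq₂ ht hu.le hsum]

lemma mem_extremePoints_convexHull_insert_add_Ici {b : E} {s : Set E}
    (hb : b ∉ convexHull ℝ s + Ici 0) :
    b ∈ (convexHull ℝ (insert b s) + Ici 0).extremePoints ℝ := by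
  rcases s.eq_empty_or_nonempty with rfl | hs
  · simpa using mem_extremePoints_singleton_add_Ici b
  refine ⟨⟨b, subset_convexHull ℝ _ (mem_insert b s), 0, le_rfl, add_zero b⟩, ?_⟩
  rw [convexHull_insert hs, convexJoin_singleton_left]
  simp only [mem_add, mem_iUnion]
  rintro _ ⟨_, ⟨z₁, hz₁, α₁, β₁, -, hβ₁, hαβ₁, rfl⟩, q₁, hq₁, rfl⟩
    _ ⟨_, ⟨z₂, hz₂, α₂, β₂, -, hβ₂, hαβ₂, rfl⟩, q₂, hq₂, rfl⟩ ⟨t, u, ht, hu, htu, hseg⟩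
  obtain rfl : α₁ = 1 - β₁ := by linarith
  obtain rfl : α₂ = 1 - β₂ := by linarith
  obtain rfl : u = 1 - t := by linarith
  -- With `γ = t β₁ + (1 - t) β₂`: if `γ > 0`, dividing `key` by `γ` puts `b` in
  -- `convexHull s + Ici 0`; if `γ = 0`, then `β₁ = 0` and `q₁ = 0`, so the first endpoint is `b`.
  have key : (t * β₁ + (1 - t) * β₂) • b =
      (t * β₁) • z₁ + ((1 - t) * β₂) • z₂ + (t • q₁ + (1 - t) • q₂) := by
    linear_combination (norm := module) -hseg
  have htβ₁ : 0 ≤ t * β₁ := mul_nonneg ht.le hβ₁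
  have huβ₂ : 0 ≤ (1 - t) * β₂ := mul_nonneg hu.le hβ₂
  rcases (add_nonneg htβ₁ huβ₂).eq_or_lt with hγ | hγ
  · obtain ⟨hβ₁0, hβ₂0⟩ : t * β₁ = 0 ∧ (1 - t) * β₂ = 0 := by constructor <;> linarith
    rw [← hγ, hβ₁0, hβ₂0] at key
    simp only [zero_smul, zero_add] at key
    have hq₁0 := eq_zero_of_smul_add_smul_eq_zero hq₁ hq₂ ht hu.le key.symm
    rw [(mul_eq_zero.mp hβ₁0).resolve_left ht.ne', hq₁0]
    simp
  · refine absurd ?_ hb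
    rw [← inv_smul_smul₀ hγ.ne' b, key, smul_add, smul_add, smul_smul, smul_smul]
    refine add_mem_add (convex_convexHull ℝ s hz₁ hz₂ (by positivity) (by positivity) ?_)
      (smul_nonneg (by positivity) (add_nonneg (smul_nonneg ht.le hq₁) (smul_nonneg hu.le hq₂)))
    rw [← mul_add, inv_mul_cancel₀ hγ.ne']

lemma convexHull_insert_add_Ici_of_notMem_extremePoints {b : E} {s : Set E}
    (hb : b ∉ (convexHull ℝ (insert b s) + Ici 0).extremePoints ℝ) :
    convexHull ℝ (insert b s) + Ici 0 = convexHull ℝ s + Ici 0 := by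
  have hbs : b ∈ convexHull ℝ s + Ici 0 := by
    by_contra h
    exact hb (mem_extremePoints_convexHull_insert_add_Ici h)
  refine subset_antisymm (convexHull_add_Ici_subset (insert_subset hbs ?_))
    (add_subset_add_right (convexHull_mono (subset_insert b s)))
  exact (subset_convexHull ℝ s).trans (subset_add_left _ self_mem_Ici)

theorem Set.Finite.convexHull_add_Ici_subset_extremePoints {t : Set E} (ht : t.Finite) :
    convexHull ℝ t + Ici 0 ⊆
      convexHull ℝ (t ∩ (convexHull ℝ t + Ici 0).extremePoints ℝ) + Ici 0 := by
  classical
  lift t to Finset E using ht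
  induction t using Finset.strongInduction with
  | H t ih =>
    by_cases hext : ∀ b ∈ t, b ∈ (convexHull ℝ (t : Set E) + Ici 0).extremePoints ℝ
    · rw [inter_eq_left.mpr hext]
    push Not at hext
    obtain ⟨b, hbt, hb⟩ := hext
    rw [← Finset.insert_erase hbt, Finset.coe_insert] at hb ⊢
    rw [convexHull_insert_add_Ici_of_notMem_extremePoints hb]
    refine (ih _ (Finset.erase_ssubset hbt)).trans ?_
    gcongr
    exact subset_insert _ _

end OrderedModule

lemma coef_add (G H : MvPowerSeries (Fin 2) ℝ) (p : ℕ × ℕ) :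
    coef (G + H) p = coef G p + coef H p :=
  map_add _ G H

lemma suppSet_add_subset (G H : MvPowerSeries (Fin 2) ℝ) :
    suppSet (G + H) ⊆ suppSet G ∪ suppSet H := by
  intro p hp
  by_contra h
  rw [mem_union, not_or] at h
  exact hp (by rw [coef_add, not_not.mp h.1, not_not.mp h.2, add_zero])

lemma embed_mono : Monotone embed := fun _ _ h ↦
  Prod.mk_le_mk.mpr ⟨Nat.cast_le.mpr h.1, Nat.cast_le.mpr h.2⟩

-- The quadrant `{q : ℝ × ℝ | 0 ≤ q.1 ∧ 0 ≤ q.2}` in `lsh` is `Ici 0` for the product order.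
lemma lsh_eq_convexHull_add_Ici (S : Set (ℕ × ℕ)) :
    lsh S = convexHull ℝ (embed '' S) + Ici 0 :=
  convexHull_add_Ici _

lemma embed_mem_lsh {S : Set (ℕ × ℕ)} {p : ℕ × ℕ} (hp : p ∈ S) : embed p ∈ lsh S := by
  rw [lsh_eq_convexHull_add_Ici]
  exact subset_add_left _ self_mem_Ici (subset_convexHull ℝ _ (mem_image_of_mem embed hp))

lemma lsh_eq_convexHull_minimal_add_Ici (S : Set (ℕ × ℕ)) :
    lsh S = convexHull ℝ (embed '' {p | Minimal (· ∈ S) p}) + Ici 0 := by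
  rw [lsh_eq_convexHull_add_Ici]
  refine subset_antisymm (convexHull_add_Ici_subset ?_) (by gcongr; exact fun p hp ↦ hp.1)
  rintro _ ⟨p, hp, rfl⟩
  obtain ⟨m, hmp, hm⟩ := exists_minimal_le_of_wellFoundedLT (· ∈ S) p hp
  exact (isUpperSet_Ici 0).add_left (embed_mono hmp)
    (subset_add_left _ self_mem_Ici (subset_convexHull ℝ _ (mem_image_of_mem embed hm)))

lemma lsh_suppSet_add_subset {G H : MvPowerSeries (Fin 2) ℝ}
    (habove : lsh (suppSet H) ⊆ lsh (suppSet G)) :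
    lsh (suppSet (G + H)) ⊆ lsh (suppSet G) := by
  rw [lsh_eq_convexHull_add_Ici, lsh_eq_convexHull_add_Ici]
  refine convexHull_add_Ici_subset ?_
  rintro _ ⟨p, hp, rfl⟩
  rw [← lsh_eq_convexHull_add_Ici]
  rcases suppSet_add_subset G H hp with hG | hH
  exacts [embed_mem_lsh hG, habove (embed_mem_lsh hH)]

lemma mem_suppSet_add_of_mem_vertexSet {G H : MvPowerSeries (Fin 2) ℝ}
    (hnv : lamV G H ∩ lamV H G = ∅) (habove : lsh (suppSet H) ⊆ lsh (suppSet G))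
    {p : ℕ × ℕ} (hpG : p ∈ suppSet G) (hpv : p ∈ vertexSet G) : p ∈ suppSet (G + H) := by
  intro hp0
  rw [coef_add] at hp0
  have hpH : p ∈ suppSet H := fun h ↦ hpG (by linarith)
  have hpvH : p ∈ vertexSet H :=
    inter_extremePoints_subset_extremePoints_of_subset habove ⟨embed_mem_lsh hpH, hpv⟩
  exact (eq_empty_iff_forall_notMem.mp hnv) p
    ⟨⟨hpv, hpH, hp0⟩, ⟨hpvH, hpG, by linarith⟩⟩

theorem lsh_support_add_of_above_general (G H : MvPowerSeries (Fin 2) ℝ)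
    (hnv : lamV G H ∩ lamV H G = ∅)
    (habove : lsh (suppSet H) ⊆ lsh (suppSet G)) :
    lsh (suppSet (G + H)) = lsh (suppSet G) := by
  refine subset_antisymm (lsh_suppSet_add_subset habove) ?_
  set M := {p | Minimal (· ∈ suppSet G) p}
  have hM : (embed '' M).Finite :=
    (WellQuasiOrderedLE.finite_of_isAntichain (setOfPred_minimal_antichain _)).image embed
  calc lsh (suppSet G) = convexHull ℝ (embed '' M) + Ici 0 := lsh_eq_convexHull_minimal_add_Ici _
    _ ⊆ convexHull ℝ (embed '' M ∩ (convexHull ℝ (embed '' M) + Ici 0).extremePoints ℝ)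
          + Ici 0 := hM.convexHull_add_Ici_subset_extremePoints
    _ ⊆ lsh (suppSet (G + H)) := by
      rw [← lsh_eq_convexHull_minimal_add_Ici, lsh_eq_convexHull_add_Ici (suppSet (G + H))]
      gcongr
      rintro _ ⟨⟨p, hp, rfl⟩, hpv⟩
      exact mem_image_of_mem embed (mem_suppSet_add_of_mem_vertexSet hnv habove hp.1 hpv)

/-- if the Newton polygon of `H` lies above that of `G`
(`℘(Δ(H)) ⊆ ℘(Δ(G))`) and common vertices are non-vanishing for addition, then
`℘(Δ(G+H)) = ℘(Δ(G))`; in particular `N_{G+H} = N_G`. -/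
theorem lsh_support_add_of_above (G H : MvPowerSeries (Fin 2) ℝ) (hG : G ≠ 0) (hH : H ≠ 0)
    (hnv : lamV G H ∩ lamV H G = ∅)
    (habove : lsh (suppSet H) ⊆ lsh (suppSet G)) :
    lsh (suppSet (G + H)) = lsh (suppSet G) :=
  lsh_support_add_of_above_general G H hnv habove
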